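/- For every function f : ℤ → ℂ, every integer a, and every integer K ≥ 0, one has T₋(a, 7K+3) = 4·T₋(a,K) − 3·T₊(a−K, K) + S(a−K, 4K+2) + 2·S(a−K, 2K+1). -/
import Mathlib


open Finset

/-- Triangular sum `T₋(x,y) = ∑_{k=1}^{y} (y+1-k)·f(x+k)`. -/
noncomputable def Tm (f : ℤ → ℂ) (x y : ℤ) : ℂ :=
  ∑ k ∈ Finset.Icc 1 y, ((y + 1 - k : ℤ) : ℂ) * f (x + k)

/-- Triangular sum `T₊(x,y) = ∑_{k=1}^{y} k·f(x+k)`. -/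
noncomputable def Tp (f : ℤ → ℂ) (x y : ℤ) : ℂ :=
  ∑ k ∈ Finset.Icc 1 y, ((k : ℤ) : ℂ) * f (x + k)

/-- Square sum `S(x,y) = ∑_{i=x+1}^{x+y} ∑_{j=0}^{y-1} f(i+j)`. -/
noncomputable def Sq (f : ℤ → ℂ) (x y : ℤ) : ℂ :=
  ∑ i ∈ Finset.Icc (x + 1) (x + y), ∑ j ∈ Finset.Icc 0 (y - 1), f (i + j)

/-- Shift a sum over `Icc 1 y`. -/
lemma sum_shift (g : ℤ → ℂ) (x y : ℤ) :
    ∑ k ∈ Finset.Icc 1 y, g (x + k) = ∑ n ∈ Finset.Icc (x + 1) (x + y), g n := by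
  rw [← Finset.map_add_left_Icc 1 y x, Finset.sum_map]
  simp [addLeftEmbedding]

/-- Extend a weighted sum to a larger interval using an indicator. -/
lemma extend_sum (f : ℤ → ℂ) (c : ℤ → ℤ) (lo hi L U : ℤ) (h1 : L ≤ lo) (h2 : hi ≤ U) :
    ∑ n ∈ Finset.Icc lo hi, ((c n : ℤ) : ℂ) * f n
      = ∑ n ∈ Finset.Icc L U, (((if lo ≤ n ∧ n ≤ hi then c n else 0) : ℤ) : ℂ) * f n := by
  rw [show (∑ n ∈ Finset.Icc lo hi, ((c n : ℤ) : ℂ) * f n)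
      = ∑ n ∈ Finset.Icc lo hi, (((if lo ≤ n ∧ n ≤ hi then c n else 0) : ℤ) : ℂ) * f n from
    Finset.sum_congr rfl (fun n hn => by
      rw [Finset.mem_Icc] at hn
      rw [if_pos hn])]
  exact Finset.sum_subset (Finset.Icc_subset_Icc h1 h2) (fun n _ hn => by
    rw [Finset.mem_Icc] at hn
    rw [if_neg (by omega), Int.cast_zero, zero_mul])

lemma Tm_big (f : ℤ → ℂ) (x y L U : ℤ) (h1 : L ≤ x + 1) (h2 : x + y ≤ U) :
    Tm f x y = ∑ n ∈ Finset.Icc L U,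
      (((if x + 1 ≤ n ∧ n ≤ x + y then x + y + 1 - n else 0) : ℤ) : ℂ) * f n := by
  rw [Tm, ← extend_sum f (fun n => x + y + 1 - n) (x + 1) (x + y) L U h1 h2, ← sum_shift]
  apply Finset.sum_congr rfl
  intro k _
  push_cast
  ring

lemma Tp_big (f : ℤ → ℂ) (x y L U : ℤ) (h1 : L ≤ x + 1) (h2 : x + y ≤ U) :
    Tp f x y = ∑ n ∈ Finset.Icc L U,
      (((if x + 1 ≤ n ∧ n ≤ x + y then n - x else 0) : ℤ) : ℂ) * f n := by
  rw [Tp, ← extend_sum f (fun n => n - x) (x + 1) (x + y) L U h1 h2, ← sum_shift]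
  apply Finset.sum_congr rfl
  intro k _
  push_cast
  ring

/-- The square sum as a weighted single sum. -/
lemma Sq_eq (f : ℤ → ℂ) (x y : ℤ) :
    Sq f x y = ∑ n ∈ Finset.Icc (x + 1) (x + 2 * y - 1),
      ((min (min (n - x) y) (x + 2 * y - n) : ℤ) : ℂ) * f n := by
  rw [Sq]
  have step1 : ∀ i ∈ Finset.Icc (x + 1) (x + y),
      (∑ j ∈ Finset.Icc 0 (y - 1), f (i + j))
        = ∑ n ∈ Finset.Icc (x + 1) (x + 2 * y - 1),
            (if i ≤ n ∧ n ≤ i + y - 1 then f n else 0) := by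
    intro i hi
    rw [Finset.mem_Icc] at hi
    have hmap : ∑ j ∈ Finset.Icc 0 (y - 1), f (i + j) = ∑ n ∈ Finset.Icc i (i + y - 1), f n := by
      rw [show Finset.Icc i (i + y - 1) = Finset.map (addLeftEmbedding i) (Finset.Icc 0 (y - 1))
          from by rw [Finset.map_add_left_Icc]; congr 1 <;> ring, Finset.sum_map]
      simp [addLeftEmbedding]
    rw [hmap,
      show (∑ n ∈ Finset.Icc i (i + y - 1), f n)
        = ∑ n ∈ Finset.Icc i (i + y - 1), (if i ≤ n ∧ n ≤ i + y - 1 then f n else 0) from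
        Finset.sum_congr rfl (fun n hn => by rw [Finset.mem_Icc] at hn; rw [if_pos hn])]
    exact Finset.sum_subset (Finset.Icc_subset_Icc (by omega) (by omega))
      (fun n _ hn => by rw [Finset.mem_Icc] at hn; rw [if_neg (by omega)])
  rw [Finset.sum_congr rfl step1, Finset.sum_comm]
  apply Finset.sum_congr rfl
  intro n hn
  rw [Finset.mem_Icc] at hn
  rw [Finset.sum_ite, Finset.sum_const_zero, add_zero, Finset.sum_const,
    show Finset.filter (fun i => i ≤ n ∧ n ≤ i + y - 1) (Finset.Icc (x + 1) (x + y))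
      = Finset.Icc (max (x + 1) (n - y + 1)) (min (x + y) n) from by
        ext i; simp only [Finset.mem_filter, Finset.mem_Icc]; omega,
    Int.card_Icc, nsmul_eq_mul]
  congr 1
  have h : ((min (x + y) n + 1 - max (x + 1) (n - y + 1)).toNat : ℤ)
      = min (min (n - x) y) (x + 2 * y - n) := by omega
  rw [show (((min (x + y) n + 1 - max (x + 1) (n - y + 1)).toNat : ℕ) : ℂ)
      = (((min (x + y) n + 1 - max (x + 1) (n - y + 1)).toNat : ℤ) : ℂ) from by push_cast; ring, h]

lemma Sq_big (f : ℤ → ℂ) (x y L U : ℤ) (h1 : L ≤ x + 1) (h2 : x + 2 * y - 1 ≤ U) :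
    Sq f x y = ∑ n ∈ Finset.Icc L U,
      (((if x + 1 ≤ n ∧ n ≤ x + 2 * y - 1 then min (min (n - x) y) (x + 2 * y - n) else 0) : ℤ) : ℂ)
        * f n := by
  rw [Sq_eq, extend_sum f (fun n => min (min (n - x) y) (x + 2 * y - n)) (x + 1) (x + 2 * y - 1) L U h1 h2]

/-- For every `f : ℤ → ℂ`, `a : ℤ` and `K ≥ 0`:
`T₋(a, 7K+3) = 4·T₋(a,K) − 3·T₊(a−K, K) + S(a−K, 4K+2) + 2·S(a−K, 2K+1)`. -/
theorem Tminus_seven (f : ℤ → ℂ) (a K : ℤ) (hK : 0 ≤ K) :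
    Tm f a (7 * K + 3) =
      4 * Tm f a K - 3 * Tp f (a - K) K +
        Sq f (a - K) (4 * K + 2) + 2 * Sq f (a - K) (2 * K + 1) := by
  rw [Tm_big f a (7 * K + 3) (a - K + 1) (a + 7 * K + 3) (by omega) (by omega),
      Tm_big f a K (a - K + 1) (a + 7 * K + 3) (by omega) (by omega),
      Tp_big f (a - K) K (a - K + 1) (a + 7 * K + 3) (by omega) (by omega),
      Sq_big f (a - K) (4 * K + 2) (a - K + 1) (a + 7 * K + 3) (by omega) (by omega),
      Sq_big f (a - K) (2 * K + 1) (a - K + 1) (a + 7 * K + 3) (by omega) (by omega),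
      Finset.mul_sum, Finset.mul_sum, Finset.mul_sum,
      ← Finset.sum_sub_distrib, ← Finset.sum_add_distrib, ← Finset.sum_add_distrib]
  apply Finset.sum_congr rfl
  intro n hn
  rw [Finset.mem_Icc] at hn
  rw [show (((if a + 1 ≤ n ∧ n ≤ a + (7 * K + 3) then a + (7 * K + 3) + 1 - n else 0) : ℤ) : ℂ)
      = (((4 * (if a + 1 ≤ n ∧ n ≤ a + K then a + K + 1 - n else 0)
          - 3 * (if a - K + 1 ≤ n ∧ n ≤ a - K + K then n - (a - K) else 0)
          + (if a - K + 1 ≤ n ∧ n ≤ a - K + 2 * (4 * K + 2) - 1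
              then min (min (n - (a - K)) (4 * K + 2)) (a - K + 2 * (4 * K + 2) - n) else 0)
          + 2 * (if a - K + 1 ≤ n ∧ n ≤ a - K + 2 * (2 * K + 1) - 1
              then min (min (n - (a - K)) (2 * K + 1)) (a - K + 2 * (2 * K + 1) - n) else 0)) : ℤ) : ℂ)
      from by congr 1; split_ifs <;> omega]
  push_cast
  ring
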